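/- Let G = (V, w_G) be a weighted graph with n vertices and maximum edge weight W ≥ 1, let 0 < ε < 1/3, and let H be an ε-cut sparsifier of G with integral weights whose maximum edge weight is at most c·ε²·n·W. Let F be a maximum s-t flow in H, H' the graph with weights w_H − F, and P = {A_1,...,A_t} a 3εn-strong partition of H' (each H'[A_i] is 3εn-connected and the total weight in H' of edges between different parts is O(εn²)). Then Σ_{i=1}^t w_G(Δ_G(A_i)) = O(ε·n²·W). -/

import Mathlib

open Finset

section defs

variable {V : Type*} [Fintype V] [DecidableEq V]

/-- Total weight of the cut determined by shore `X`. -/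
def cutWeight (w : V → V → ℝ) (X : Finset V) : ℝ :=
  ∑ u ∈ X, ∑ v ∈ Xᶜ, w u v

/-- Minimum `s`-`t` cut value. -/
noncomputable def minCut (w : V → V → ℝ) (s t : V) : ℝ :=
  sInf {r : ℝ | ∃ X : Finset V, s ∈ X ∧ t ∉ X ∧ cutWeight w X = r}

/-- The induced subgraph on `S` is `k`-connected. -/
def KConn (w : V → V → ℝ) (k : ℝ) (S : Finset V) : Prop :=
  ∀ B : Finset V, B ⊆ S → B.Nonempty → B ≠ S →
    k ≤ ∑ i ∈ B, ∑ j ∈ S \ B, w i j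

end defs

/-!
Each part's cut in `H` splits into its `H' = H - F` part, bounded by hypothesis, and its `|F|`
part, bounded by the total flow `∑ |F| = 2 ∑ F⁺`. As `F` has no cycles, a topological numbering
of the vertices makes every flow-carrying pair go upwards; the level sets of the numbering are
cuts, each crossed by at most the flow value `λ ≤ (1 + ε) n W`, so `∑ F⁺(u, v) · gap(u, v) ≤ n λ`.
The at most `n k` pairs of gap `≤ k` carry at most `c ε² n W` each, the others at most
`F⁺ · gap / k`; with `k = ⌈1/ε⌉` this gives `∑ F⁺ = O(ε n² W)`. Finally the sparsifier turns
`H`-cuts into `G`-cuts at a cost of a factor `1 / (1 - ε) ≤ 3/2`.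
-/

open Relation

theorem Relation.TransGen.exists_fin_path {α : Type*} {r : α → α → Prop} {a b : α}
    (h : TransGen r a b) :
    ∃ (m : ℕ) (g : Fin (m + 1) → α), g 0 = a ∧ (∀ i : Fin m, r (g i.castSucc) (g i.succ)) ∧
      r (g (Fin.last m)) b := by
  induction h with
  | single hab => exact ⟨0, fun _ => a, rfl, Fin.elim0, hab⟩
  | @tail b c _ hbc ih =>
    obtain ⟨m, g, hg0, hchain, hlast⟩ := ih
    refine ⟨m + 1, Fin.snoc g b, by rw [← Fin.castSucc_zero, Fin.snoc_castSucc, hg0], ?_,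
      by simpa using hbc⟩
    intro i
    induction i using Fin.lastCases with
    | last => simpa using hlast
    | cast j =>
      rw [Fin.succ_castSucc, Fin.snoc_castSucc, Fin.snoc_castSucc]
      exact hchain j

theorem exists_equiv_fin_of_acyclic {α : Type*} [Fintype α] (r : α → α → Prop)
    (hr : ∀ a, ¬ TransGen r a a) :
    ∃ e : α ≃ Fin (Fintype.card α), ∀ a b, r a b → e a < e b := by
  let _ : PartialOrder α :=
    { le := ReflTransGen r
      le_refl := fun _ => .refl
      le_trans := fun _ _ _ => .trans
      le_antisymm := fun a b hab hba => by
        rcases reflTransGen_iff_eq_or_transGen.mp hab with rfl | hab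
        · rfl
        rcases reflTransGen_iff_eq_or_transGen.mp hba with rfl | hba
        · rfl
        exact (hr a (hab.trans hba)).elim }
  let _ : Fintype (LinearExtension α) := ‹Fintype α›
  let iso := Fintype.orderIsoFinOfCardEq (LinearExtension α) rfl
  refine ⟨iso.symm.toEquiv, fun a b hab => iso.symm.strictMono ?_⟩
  have hne : a ≠ b := by rintro rfl; exact hr a (.single hab)
  exact (toLinearExtension.monotone (ReflTransGen.single hab : a ≤ b)).lt_of_ne hne

lemma not_transGen_self_of_forall_not_cycle {α : Type*} {r : α → α → Prop}
    (h : ∀ (m : ℕ) (cyc : Fin (m + 1) → α),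
      ¬ ((∀ i : Fin m, r (cyc i.castSucc) (cyc i.succ)) ∧ r (cyc (Fin.last m)) (cyc 0)))
    (a : α) : ¬ TransGen r a a := by
  intro ha
  obtain ⟨m, g, hg0, hchain, hlast⟩ := ha.exists_fin_path
  exact h m g ⟨hchain, hg0 ▸ hlast⟩

section Cut

variable {V : Type*} [Fintype V] [DecidableEq V]

lemma cutWeight_add (w w' : V → V → ℝ) (X : Finset V) :
    cutWeight (fun u v => w u v + w' u v) X = cutWeight w X + cutWeight w' X := by
  simp only [cutWeight, sum_add_distrib]

lemma cutWeight_mono {w w' : V → V → ℝ} (h : ∀ u v, w u v ≤ w' u v) (X : Finset V) :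
    cutWeight w X ≤ cutWeight w' X :=
  sum_le_sum fun u _ => sum_le_sum fun v _ => h u v

lemma cutWeight_nonneg {w : V → V → ℝ} (h : ∀ u v, 0 ≤ w u v) (X : Finset V) :
    0 ≤ cutWeight w X :=
  sum_nonneg fun u _ => sum_nonneg fun v _ => h u v

lemma abs_cutWeight_le (w : V → V → ℝ) (X : Finset V) :
    |cutWeight w X| ≤ cutWeight (fun u v => |w u v|) X :=
  (abs_sum_le_sum_abs _ _).trans (sum_le_sum fun _ _ => abs_sum_le_sum_abs _ _)

lemma cutWeight_singleton_le {w : V → V → ℝ} {W : ℝ} (s : V) (hw : ∀ v, w s v ≤ W)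
    (hW : 0 ≤ W) : cutWeight w {s} ≤ Fintype.card V * W := by
  rw [cutWeight, sum_singleton]
  calc ∑ v ∈ {s}ᶜ, w s v ≤ #({s}ᶜ : Finset V) • W := sum_le_card_nsmul _ _ _ fun v _ => hw v
    _ ≤ Fintype.card V * W := by
      rw [nsmul_eq_mul]
      exact mul_le_mul_of_nonneg_right (by exact_mod_cast card_le_univ _) hW

lemma sum_cutWeight_le_of_pairwiseDisjoint {w : V → V → ℝ} (hw : ∀ u v, 0 ≤ w u v)
    {P : Finset (Finset V)} (hP : (P : Set (Finset V)).PairwiseDisjoint id) :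
    ∑ A ∈ P, cutWeight w A ≤ ∑ u, ∑ v, w u v :=
  calc ∑ A ∈ P, cutWeight w A ≤ ∑ A ∈ P, ∑ u ∈ A, ∑ v, w u v :=
        sum_le_sum fun _ _ => sum_le_sum fun u _ =>
          sum_le_sum_of_subset_of_nonneg (subset_univ _) fun v _ _ => hw u v
    _ = ∑ u ∈ P.biUnion id, ∑ v, w u v := (sum_biUnion hP).symm
    _ ≤ ∑ u, ∑ v, w u v :=
        sum_le_sum_of_subset_of_nonneg (subset_univ _) fun u _ _ => sum_nonneg fun v _ => hw u v

end Cut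

section Flow

lemma sum_sum_eq_zero_of_skew {α : Type*} {f : α → α → ℝ} (hf : ∀ u v, f u v = -f v u)
    (X : Finset α) :
    ∑ u ∈ X, ∑ v ∈ X, f u v = 0 := by
  have h : ∑ u ∈ X, ∑ v ∈ X, f u v + ∑ u ∈ X, ∑ v ∈ X, f v u = 0 := by
    rw [← sum_add_distrib]
    exact sum_eq_zero fun u _ => by
      rw [← sum_add_distrib]; exact sum_eq_zero fun v _ => by rw [hf u v]; ring
  rw [sum_comm (f := fun u v => f v u)] at h
  linarith

variable {V : Type*} [Fintype V] [DecidableEq V] {f : V → V → ℝ}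

lemma cutWeight_eq_sum_sum_of_skew (hf : ∀ u v, f u v = -f v u) (X : Finset V) :
    cutWeight f X = ∑ u ∈ X, ∑ v, f u v := by
  simp only [← sum_add_sum_compl X (f _), sum_add_distrib, sum_sum_eq_zero_of_skew hf, zero_add,
    cutWeight]

lemma cutWeight_le_abs_flowValue (hf : ∀ u v, f u v = -f v u) {s t : V} (hst : s ≠ t)
    (hcons : ∀ u, u ≠ s → u ≠ t → ∑ v, f u v = 0) (X : Finset V) :
    cutWeight f X ≤ |∑ v, f s v| := by
  set N : V → ℝ := fun u => ∑ v, f u v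
  have hpair : ∀ g : V → ℝ, (∀ u, u ≠ s → u ≠ t → g u = 0) → ∑ u, g u = g s + g t :=
    fun g hg => by
      rw [← sum_pair hst]
      exact (sum_subset (subset_univ _) fun u _ hu => by
        simp only [mem_insert, mem_singleton, not_or] at hu; exact hg u hu.1 hu.2).symm
  have hst_sum : N s + N t = 0 := by
    rw [← hpair N hcons]; exact sum_sum_eq_zero_of_skew hf univ
  have hX : ∑ u ∈ X, N u = (if s ∈ X then N s else 0) + (if t ∈ X then N t else 0) := by
    rw [← univ_inter X, ← sum_ite_mem, univ_inter]
    exact hpair _ fun u hs ht => by simp [N, hcons u hs ht]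
  rw [cutWeight_eq_sum_sum_of_skew hf, hX]
  have := le_abs_self (N s); have := neg_le_abs (N s); have := abs_nonneg (N s)
  split_ifs <;> linarith

end Flow

section Ranking

lemma card_rankGap_le {V : Type*} [Fintype V] {pos : V → ℕ} (hpos : Function.Injective pos)
    (k : ℕ) :
    #{p : V × V | 0 < pos p.2 - pos p.1 ∧ pos p.2 - pos p.1 ≤ k} ≤ Fintype.card V * k := by
  calc _ ≤ #(univ ×ˢ range k : Finset (V × ℕ)) := by
        refine card_le_card_of_injOn (fun p => (p.1, pos p.2 - pos p.1 - 1)) ?_ ?_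
        · intro p hp
          simp only [coe_filter, Set.mem_ofPred_eq] at hp
          simp only [coe_product, coe_univ, coe_range, Set.mem_prod, Set.mem_univ, Set.mem_Iio,
            true_and]
          omega
        · intro p hp q hq hpq
          simp only [coe_filter, Set.mem_ofPred_eq] at hp hq
          simp only [Prod.mk.injEq] at hpq
          refine Prod.ext hpq.1 (hpos ?_)
          have := congrArg pos hpq.1
          omega
    _ = Fintype.card V * k := by simp

variable {V : Type*} [Fintype V] [DecidableEq V]

/-- The cuts of the level sets `{v | pos v ≤ i}`, `i < N`, together count each pair `(u, v)`
once per level it crosses. -/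
lemma sum_mul_rankGap_le (f : V → V → ℝ) (pos : V → ℕ) {N : ℕ} (hpos : ∀ v, pos v ≤ N)
    {L : ℝ} (hcut : ∀ X, cutWeight f X ≤ L) :
    ∑ u, ∑ v, f u v * ((pos v - pos u : ℕ) : ℝ) ≤ N * L := by
  have hlevel : ∀ i, cutWeight f {v | pos v ≤ i} =
      ∑ u, ∑ v, if pos u ≤ i ∧ i < pos v then f u v else 0 := by
    intro i
    simp only [cutWeight, compl_filter, not_le, sum_filter, ite_and]
    exact sum_congr rfl fun u _ => by split_ifs <;> simp
  have hgap : ∀ u v, f u v * ((pos v - pos u : ℕ) : ℝ) =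
      ∑ i ∈ range N, if pos u ≤ i ∧ i < pos v then f u v else 0 := by
    intro u v
    rw [← sum_filter, sum_const, nsmul_eq_mul, mul_comm]
    congr 2
    rw [← Nat.card_Ico]
    congr 1
    ext i
    simp only [mem_filter, mem_range, mem_Ico]
    have := hpos v
    omega
  calc ∑ u, ∑ v, f u v * ((pos v - pos u : ℕ) : ℝ)
      = ∑ i ∈ range N, cutWeight f {v | pos v ≤ i} := by
        simp only [hgap, hlevel]
        exact (sum_congr rfl fun _ _ => sum_comm).trans sum_comm
    _ ≤ ∑ _i ∈ range N, L := sum_le_sum fun i _ => hcut _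
    _ = N * L := by simp

end Ranking

lemma max_zero_le_ite_add_mul_div {x M : ℝ} {d k : ℕ} (hk : 0 < k) (hxM : |x| ≤ M)
    (hpos : 0 < x → 0 < d) (hneg : x < 0 → d = 0) :
    max x 0 ≤ (if 0 < d ∧ d ≤ k then M else 0) + x * d / k := by
  have hkR : (0 : ℝ) < k := by exact_mod_cast hk
  rcases lt_trichotomy x 0 with hx | rfl | hx
  · simp [hneg hx, hx.le]
  · have : 0 ≤ M := (abs_nonneg _).trans hxM
    split_ifs <;> simp [this]
  · have hd := hpos hx
    rw [max_eq_left hx.le]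
    split_ifs with hdk
    · have : x ≤ M := (le_abs_self x).trans hxM
      have : 0 ≤ x * d / k := by positivity
      linarith
    · have hkd : (k : ℝ) ≤ d := by exact_mod_cast (not_and.mp hdk hd |> not_le.mp).le
      rw [zero_add, le_div_iff₀ hkR]
      exact mul_le_mul_of_nonneg_left hkd hx.le

section FlowWeight

variable {V : Type*} [Fintype V] [DecidableEq V] {f : V → V → ℝ}

lemma sum_max_zero_le_of_acyclic (hf : ∀ u v, f u v = -f v u) {s t : V} (hst : s ≠ t)
    (hcons : ∀ u, u ≠ s → u ≠ t → ∑ v, f u v = 0)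
    (hacyc : ∀ v, ¬ TransGen (fun a b => 0 < f a b) v v) {M : ℝ} (hcap : ∀ u v, |f u v| ≤ M)
    {k : ℕ} (hk : 0 < k) :
    ∑ u, ∑ v, max (f u v) 0 ≤
      Fintype.card V * k * M + Fintype.card V * |∑ v, f s v| / k := by
  obtain ⟨e, he⟩ := exists_equiv_fin_of_acyclic _ hacyc
  set pos : V → ℕ := fun v => e v
  have hM : 0 ≤ M := (abs_nonneg _).trans (hcap s s)
  have hgap := sum_mul_rankGap_le f pos (fun v => (e v).isLt.le)
    (cutWeight_le_abs_flowValue hf hst hcons)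
  have hcard := card_rankGap_le (Fin.val_injective.comp e.injective : pos.Injective) k
  have hpoint : ∀ u v, max (f u v) 0 ≤
      (if 0 < pos v - pos u ∧ pos v - pos u ≤ k then M else 0) +
        f u v * ((pos v - pos u : ℕ) : ℝ) / k := fun u v =>
    max_zero_le_ite_add_mul_div hk (hcap u v) (fun h => Nat.sub_pos_of_lt (he u v h))
      (fun h => Nat.sub_eq_zero_of_le (he v u (by rw [hf]; linarith)).le)
  calc ∑ u, ∑ v, max (f u v) 0
      ≤ ∑ u, ∑ v, ((if 0 < pos v - pos u ∧ pos v - pos u ≤ k then M else 0) +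
          f u v * ((pos v - pos u : ℕ) : ℝ) / k) :=
        sum_le_sum fun u _ => sum_le_sum fun v _ => hpoint u v
    _ = #{p : V × V | 0 < pos p.2 - pos p.1 ∧ pos p.2 - pos p.1 ≤ k} * M +
          (∑ u, ∑ v, f u v * ((pos v - pos u : ℕ) : ℝ)) / k := by
        simp only [sum_add_distrib, sum_div]
        rw [← nsmul_eq_mul, ← sum_const, sum_filter,
          Fintype.sum_prod_type'
            (fun u v => if 0 < pos v - pos u ∧ pos v - pos u ≤ k then M else 0)]
    _ ≤ Fintype.card V * k * M + Fintype.card V * |∑ v, f s v| / k := by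
        gcongr
        exact_mod_cast hcard

lemma sum_max_zero_le_of_acyclic_of_le_one (hf : ∀ u v, f u v = -f v u) {s t : V}
    (hst : s ≠ t) (hcons : ∀ u, u ≠ s → u ≠ t → ∑ v, f u v = 0)
    (hacyc : ∀ v, ¬ TransGen (fun a b => 0 < f a b) v v) {M : ℝ} (hcap : ∀ u v, |f u v| ≤ M)
    {ε : ℝ} (hε0 : 0 < ε) (hε1 : ε ≤ 1) :
    ∑ u, ∑ v, max (f u v) 0 ≤
      2 * Fintype.card V * M / ε + ε * Fintype.card V * |∑ v, f s v| := by
  have hM : 0 ≤ M := (abs_nonneg _).trans (hcap s s)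
  set k := ⌈ε⁻¹⌉₊
  have hk : 0 < k := Nat.ceil_pos.mpr (inv_pos.mpr hε0)
  have hkR : (0 : ℝ) < k := by exact_mod_cast hk
  have hk2 : (k : ℝ) ≤ 2 / ε := by
    have : 1 ≤ ε⁻¹ := one_le_inv₀ hε0 |>.mpr hε1
    rw [div_eq_mul_inv]
    linarith [Nat.ceil_lt_add_one (inv_pos.mpr hε0).le]
  calc ∑ u, ∑ v, max (f u v) 0
      ≤ Fintype.card V * k * M + Fintype.card V * |∑ v, f s v| / k :=
        sum_max_zero_le_of_acyclic hf hst hcons hacyc hcap hk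
    _ ≤ Fintype.card V * (2 / ε) * M + Fintype.card V * |∑ v, f s v| * ε := by
        gcongr
        have hεk1 : 1 ≤ ε * k :=
          calc 1 = ε * ε⁻¹ := (mul_inv_cancel₀ hε0.ne').symm
            _ ≤ ε * k := by gcongr; exact Nat.le_ceil _
        rw [div_le_iff₀ hkR, mul_assoc]
        exact le_mul_of_one_le_right (by positivity) hεk1
    _ = _ := by ring

end FlowWeight

lemma sum_sum_abs_eq_two_mul_sum_sum_max_zero {α : Type*} [Fintype α] {f : α → α → ℝ}
    (hf : ∀ u v, f u v = -f v u) :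
    ∑ u, ∑ v, |f u v| = 2 * ∑ u, ∑ v, max (f u v) 0 := by
  simp only [← max_zero_add_max_neg_zero_eq_abs_self (f _ _), sum_add_distrib, ← hf]
  rw [sum_comm (f := fun u v => max (f v u) 0)]
  ring

section Residual

variable {V : Type*} [Fintype V] [DecidableEq V]

lemma abs_flowValue_le_cutWeight {w f : V → V → ℝ} (hf : ∀ u v, f u v = -f v u)
    (hcap : ∀ u v, |f u v| ≤ w u v) (s : V) :
    |∑ v, f s v| ≤ cutWeight w {s} :=
  calc |∑ v, f s v| = |cutWeight f {s}| := by
        rw [cutWeight_eq_sum_sum_of_skew hf, sum_singleton]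
    _ ≤ cutWeight w {s} := (abs_cutWeight_le f {s}).trans (cutWeight_mono hcap {s})

lemma sum_cutWeight_le_sum_cutWeight_sub_abs_add {w f : V → V → ℝ} (hf : ∀ u v, f u v = -f v u)
    {P : Finset (Finset V)} (hP : (P : Set (Finset V)).PairwiseDisjoint id) :
    ∑ A ∈ P, cutWeight w A ≤
      ∑ A ∈ P, cutWeight (fun u v => w u v - |f u v|) A + 2 * ∑ u, ∑ v, max (f u v) 0 := by
  have hsplit : ∀ A, cutWeight w A =
      cutWeight (fun u v => w u v - |f u v|) A + cutWeight (fun u v => |f u v|) A := by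
    intro A
    rw [← cutWeight_add]
    simp
  rw [sum_congr rfl fun A _ => hsplit A, sum_add_distrib,
    ← sum_sum_abs_eq_two_mul_sum_sum_max_zero hf]
  exact add_le_add_right (sum_cutWeight_le_of_pairwiseDisjoint (fun _ _ => abs_nonneg _) hP) _

end Residual

theorem stmt14 (c c' : ℝ) (hc : 0 < c) (hc' : 0 < c') :
    ∃ C : ℝ, 0 < C ∧
      ∀ (V : Type) (_ : Fintype V) (_ : DecidableEq V)
        (wG wH : V → V → ℝ) (ε W : ℝ) (s t : V) (f : V → V → ℝ)
        (P : Finset (Finset V)),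
        s ≠ t →
        -- G has symmetric nonnegative weights bounded by W ≥ 1
        (∀ u v, wG u v = wG v u) → (∀ u v, 0 ≤ wG u v) →
        (∀ u v, wG u v ≤ W) → 1 ≤ W →
        0 < ε → ε < 1/3 →
        -- H is an ε-cut sparsifier of G with integral weights bounded by c·ε²·n·W
        (∀ u v, wH u v = wH v u) → (∀ u v, ∃ m : ℕ, wH u v = (m : ℝ)) →
        (∀ u v, 0 < wH u v → 0 < wG u v) →
        (∀ X : Finset V, (1 - ε) * cutWeight wG X ≤ cutWeight wH X ∧
          cutWeight wH X ≤ (1 + ε) * cutWeight wG X) →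
        (∀ u v, wH u v ≤ c * ε ^ 2 * (Fintype.card V : ℝ) * W) →
        -- f is a non-circular maximum s-t flow in H (skew-symmetric form)
        (∀ u v, f u v = - f v u) →
        (∀ u v, |f u v| ≤ wH u v) →
        (∀ u, u ≠ s → u ≠ t → ∑ v, f u v = 0) →
        (∑ v, f s v = minCut wH s t) →
        (∀ (m : ℕ) (cyc : Fin (m + 1) → V),
          ¬ ((∀ i : Fin m, 0 < f (cyc i.castSucc) (cyc i.succ)) ∧
              0 < f (cyc (Fin.last m)) (cyc 0))) →
        -- P is a 3εn-strong partition of H' = H − F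
        (∀ A ∈ P, ∀ B ∈ P, A ≠ B → Disjoint A B) →
        (P.biUnion id = Finset.univ) →
        (∀ A ∈ P, KConn (fun u v => wH u v - |f u v|)
          (3 * ε * (Fintype.card V : ℝ)) A) →
        (∑ A ∈ P, cutWeight (fun u v => wH u v - |f u v|) A ≤
          c' * ε * (Fintype.card V : ℝ) ^ 2) →
        -- conclusion: total G-weight of the cuts of the parts is O(ε·n²·W)
        ∑ A ∈ P, cutWeight wG A ≤ C * ε * (Fintype.card V : ℝ) ^ 2 * W := by
  refine ⟨2 * c' + 6 * c + 4, by positivity, ?_⟩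
  intro V _ _ wG wH ε W s t f P hst _ hG0 hGW hW1 hε0 hε13 _ _ _ hsparse hHcap hskew hcap
    hcons _ hnc hPdisj _ _ hPcut
  have hG_le_H : ∀ X, cutWeight wG X ≤ 3 / 2 * cutWeight wH X := fun X => by
    nlinarith [(hsparse X).1, cutWeight_nonneg hG0 X]
  have hvalue : |∑ v, f s v| ≤ 4 / 3 * (Fintype.card V * W) :=
    calc |∑ v, f s v| ≤ (1 + ε) * cutWeight wG {s} :=
          (abs_flowValue_le_cutWeight hskew hcap s).trans (hsparse {s}).2
      _ ≤ 4 / 3 * (Fintype.card V * W) := by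
          gcongr
          · exact cutWeight_nonneg hG0 _
          · linarith
          · exact cutWeight_singleton_le s (hGW s) (by linarith)
  have hflow : ∑ u, ∑ v, max (f u v) 0 ≤ (2 * c + 4 / 3) * ε * Fintype.card V ^ 2 * W :=
    calc ∑ u, ∑ v, max (f u v) 0
        ≤ 2 * Fintype.card V * (c * ε ^ 2 * Fintype.card V * W) / ε +
            ε * Fintype.card V * |∑ v, f s v| :=
          sum_max_zero_le_of_acyclic_of_le_one hskew hst hcons
            (not_transGen_self_of_forall_not_cycle hnc) (fun u v => (hcap u v).trans (hHcap u v))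
            hε0 (by linarith)
      _ ≤ 2 * Fintype.card V * (c * ε ^ 2 * Fintype.card V * W) / ε +
            ε * Fintype.card V * (4 / 3 * (Fintype.card V * W)) := by gcongr
      _ = (2 * c + 4 / 3) * ε * Fintype.card V ^ 2 * W := by field_simp
  have hH_le := sum_cutWeight_le_sum_cutWeight_sub_abs_add (w := wH) hskew
    (P := P) fun A hA B hB => hPdisj A hA B hB
  have hW : c' * ε * Fintype.card V ^ 2 ≤ c' * ε * Fintype.card V ^ 2 * W :=
    le_mul_of_one_le_right (by positivity) hW1
  have hW0 : 0 ≤ c' * ε * Fintype.card V ^ 2 * W := by positivity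
  calc ∑ A ∈ P, cutWeight wG A ≤ 3 / 2 * ∑ A ∈ P, cutWeight wH A := by
        rw [mul_sum]
        exact sum_le_sum fun A _ => hG_le_H A
    _ ≤ (2 * c' + 6 * c + 4) * ε * Fintype.card V ^ 2 * W := by
        linarith
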